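/- arXiv:2110.09203 — 5 statements merged into one kernel-verified Lean document; each statement's English description precedes it below -/
import Mathlib

section
/- Let R be a commutative ring and A an associative R-algebra that is finitely generated projective as an R-module with positive rank. If the canonical map A ⊗_R A^op → End_R(A), sending x ⊗ y to the map z ↦ x z y, is bijective, then for every ring homomorphism R → k with k a field, the k-algebra A ⊗_R k is a central simple k-algebra. -/
/-!
Over `k`, the sandwich map of `k ⊗[R] A` is still surjective: its range contains the base
changes of all `R`-endomorphisms of `A`, and these span `End_k(k ⊗[R] A)` because `A` is a
retract of a finite free module. Over a field, surjectivity of the sandwich map of `B` gives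
both halves of central simplicity. Left multiplication by a central element commutes with
every `k`-endomorphism of `B`, hence is a scalar. A nonzero two-sided ideal is stable under
every endomorphism, and some endomorphism sends one of its nonzero elements to `1`. Positivity
of the rank at the prime below `(0) ⊂ k` makes `k ⊗[R] A` nonzero.
-/

open TensorProduct

/-- The canonical map `A ⊗[R] Aᵐᵒᵖ →ₗ[R] End_R(A)`, `(x ⊗ y) · z = x * z * y`. -/
noncomputable def azumayaMap (R A : Type*) [CommRing R] [Ring A] [Algebra R A] :
    A ⊗[R] Aᵐᵒᵖ →ₗ[R] Module.End R A :=
  TensorProduct.lift <| LinearMap.mk₂ R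
    (fun x y => LinearMap.mulLeft R x ∘ₗ LinearMap.mulRight R y.unop)
    (fun x x' y => by ext z; simp [add_mul])
    (fun c x y => by ext z; simp [smul_mul_assoc])
    (fun x y y' => by ext z; simp [mul_add])
    (fun c x y => by ext z; simp [mul_smul_comm, smul_mul_assoc])

/-- Azumaya algebra: finitely generated projective faithful module whose sandwich map
`A ⊗[R] Aᵐᵒᵖ → End_R(A)` is bijective. -/
def IsAzumaya' (R A : Type*) [CommRing R] [Ring A] [Algebra R A] : Prop :=
  Module.Finite R A ∧ Module.Projective R A ∧ FaithfulSMul R A ∧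
    Function.Bijective (azumayaMap R A)

/-- Central simple algebra over a field: finite-dimensional, center `k`, simple. -/
def IsCentralSimple (k A : Type*) [Field k] [Ring A] [Algebra k A] : Prop :=
  FiniteDimensional k A ∧ Subalgebra.center k A = ⊥ ∧ IsSimpleRing A

@[simp] theorem azumayaMap_tmul {R A : Type*} [CommRing R] [Ring A] [Algebra R A]
    (x : A) (y : Aᵐᵒᵖ) (z : A) :
    azumayaMap R A (x ⊗ₜ y) z = x * (z * y.unop) := by
  simp [azumayaMap]

section BaseChange

variable {R k M : Type*} [CommRing R] [CommRing k] [Algebra R k] [AddCommGroup M] [Module R M]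

theorem Module.span_range_baseChange_end_of_free [Module.Free R M] [Module.Finite R M] :
    Submodule.span k (Set.range fun f : Module.End R M => f.baseChange k) = ⊤ := by
  have j := TensorProduct.isBaseChange R M k
  have hend (f : Module.End R M) : j.endHom f = f.baseChange k := by
    ext m
    exact j.endHom_comp_apply f m
  refine Submodule.eq_top_iff'.mpr fun T => ?_
  induction T using j.end.inductionOn with
  | zero => exact zero_mem _
  | tmul f => exact Submodule.subset_span ⟨f, (hend f).symm⟩
  | smul c T h => exact Submodule.smul_mem _ c h
  | add S T hS hT => exact add_mem hS hT

theorem Module.span_range_baseChange_end [Module.Finite R M] [Module.Projective R M] :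
    Submodule.span k (Set.range fun f : Module.End R M => f.baseChange k) = ⊤ := by
  obtain ⟨n, f, g, -, -, hfg⟩ := Module.Finite.exists_comp_eq_id_of_projective R M
  let conj : Module.End k (k ⊗[R] (Fin n → R)) →ₗ[k] Module.End k (k ⊗[R] M) :=
    LinearMap.lcomp k _ (g.baseChange k) ∘ₗ LinearMap.llcomp k _ _ _ (f.baseChange k)
  have hfg' (y : k ⊗[R] M) : f.baseChange k (g.baseChange k y) = y := by
    rw [← LinearMap.comp_apply, ← LinearMap.baseChange_comp, hfg, LinearMap.baseChange_id]
    rfl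
  refine Submodule.eq_top_iff'.mpr fun T => ?_
  have hT : conj (g.baseChange k ∘ₗ T ∘ₗ f.baseChange k) = T := by
    refine LinearMap.ext fun x => ?_
    simp only [conj, LinearMap.comp_apply, LinearMap.lcomp_apply, LinearMap.llcomp_apply, hfg']
  rw [← hT]
  refine (Submodule.map_span_le conj (Set.range fun ψ : Module.End R (Fin n → R) =>
    ψ.baseChange k) _).mpr ?_ (Submodule.mem_map_of_mem ?_)
  · rintro _ ⟨ψ, rfl⟩
    exact Submodule.subset_span ⟨f ∘ₗ ψ ∘ₗ g, by
      simp only [LinearMap.baseChange_comp]; rfl⟩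
  · rw [Module.span_range_baseChange_end_of_free]
    trivial

end BaseChange

section Sandwich

variable {k B : Type*} [CommRing k] [Ring B] [Algebra k B]

theorem TwoSidedIdeal.azumayaMap_apply_mem (I : TwoSidedIdeal B) {a : B} (ha : a ∈ I)
    (t : B ⊗[k] Bᵐᵒᵖ) : azumayaMap k B t a ∈ I := by
  induction t using TensorProduct.induction_on with
  | zero => exact I.zero_mem
  | tmul x y => exact I.mul_mem_left _ _ (I.mul_mem_right _ _ ha)
  | add u v hu hv =>
    rw [map_add, LinearMap.add_apply]
    exact I.add_mem hu hv

theorem commute_mulLeft_azumayaMap {z : B} (hz : z ∈ Set.center B) (t : B ⊗[k] Bᵐᵒᵖ) :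
    Commute (LinearMap.mulLeft k z) (azumayaMap k B t) := by
  induction t using TensorProduct.induction_on with
  | zero => exact Commute.zero_right _
  | tmul x y =>
    ext w
    simp [← mul_assoc, (Semigroup.mem_center_iff.mp hz x).symm]
  | add u v hu hv => simpa only [map_add] using hu.add_right hv

end Sandwich

section Field

variable {k B : Type*} [Field k] [Ring B] [Algebra k B]

theorem center_eq_bot_of_surjective_azumayaMap (h : Function.Surjective (azumayaMap k B)) :
    Subalgebra.center k B = ⊥ := by
  refine eq_bot_iff.mpr fun z hz => ?_
  have hL : LinearMap.mulLeft k z ∈ Set.center (Module.End k B) :=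
    Semigroup.mem_center_iff.mpr fun T => by
      obtain ⟨t, rfl⟩ := h T
      exact (commute_mulLeft_azumayaMap hz t).symm.eq
  obtain ⟨c, _, hc⟩ := Module.End.mem_center_iff.mp hL
  refine Algebra.mem_bot.mpr ⟨c, ?_⟩
  simpa [Algebra.algebraMap_eq_smul_one] using (LinearMap.congr_fun hc 1).symm

theorem isSimpleRing_of_surjective_azumayaMap [Nontrivial B]
    (h : Function.Surjective (azumayaMap k B)) : IsSimpleRing B := by
  refine .of_eq_bot_or_eq_top fun I => or_iff_not_imp_left.mpr fun hI => ?_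
  obtain ⟨a, haI, ha0 : a ≠ 0⟩ := SetLike.exists_of_lt (bot_lt_iff_ne_bot.mpr hI)
  obtain ⟨ε, hε⟩ := Module.Projective.exists_dual_eq_one k ha0
  obtain ⟨t, ht⟩ := h (ε.smulRight 1)
  have h1 := I.azumayaMap_apply_mem haI t
  rw [ht, LinearMap.smulRight_apply, hε, one_smul] at h1
  exact I.one_mem_iff.mp h1

theorem isCentralSimple_of_surjective_azumayaMap [FiniteDimensional k B] [Nontrivial B]
    (h : Function.Surjective (azumayaMap k B)) : IsCentralSimple k B :=
  ⟨inferInstance, center_eq_bot_of_surjective_azumayaMap h,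
    isSimpleRing_of_surjective_azumayaMap h⟩

end Field

section BaseChangeAlgebra

variable {R A : Type*} (k : Type*) [CommRing R] [Ring A] [Algebra R A] [CommRing k] [Algebra R k]

theorem baseChange_azumayaMap_mem_range (t : A ⊗[R] Aᵐᵒᵖ) :
    (azumayaMap R A t).baseChange k ∈ LinearMap.range (azumayaMap k (k ⊗[R] A)) := by
  induction t using TensorProduct.induction_on with
  | zero => simp
  | tmul x y =>
    refine ⟨((1 : k) ⊗ₜ x) ⊗ₜ MulOpposite.op ((1 : k) ⊗ₜ y.unop), ?_⟩
    ext w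
    simp
  | add u v hu hv => simpa only [map_add, LinearMap.baseChange_add] using add_mem hu hv

theorem surjective_azumayaMap_baseChange [Module.Finite R A] [Module.Projective R A]
    (h : Function.Surjective (azumayaMap R A)) :
    Function.Surjective (azumayaMap k (k ⊗[R] A)) := by
  refine LinearMap.range_eq_top.mp (top_le_iff.mp ?_)
  rw [← Module.span_range_baseChange_end, Submodule.span_le]
  rintro _ ⟨f, rfl⟩
  obtain ⟨t, rfl⟩ := h f
  exact baseChange_azumayaMap_mem_range k t

end BaseChangeAlgebra

theorem Module.nontrivial_baseChange_of_rankAtStalk_pos {R M : Type*} (k : Type*) [CommRing R]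
    [AddCommGroup M] [Module R M] [Module.Finite R M] [Module.Flat R M] [Field k] [Algebra R k]
    (hpos : ∀ p : PrimeSpectrum R, 0 < Module.rankAtStalk M p) : Nontrivial (k ⊗[R] M) := by
  have h := Module.rankAtStalk_baseChange (R := R) (M := M) (⊥ : PrimeSpectrum k)
  rw [Module.rankAtStalk_eq_finrank_of_free] at h
  exact Module.finrank_pos_iff.mp (h ▸ hpos _)

theorem stmt0 {R A : Type u} [CommRing R] [Ring A] [Algebra R A]
    [Module.Finite R A] [Module.Projective R A]
    (hpos : ∀ p : PrimeSpectrum R, 0 < Module.rankAtStalk A p)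
    (hbij : Function.Bijective (azumayaMap R A)) :
    ∀ (k : Type u) [Field k] (φ : R →+* k),
      letI : Algebra R k := φ.toAlgebra
      IsCentralSimple k (k ⊗[R] A) := by
  intro k _ φ
  let : Algebra R k := φ.toAlgebra
  have := Module.nontrivial_baseChange_of_rankAtStalk_pos k hpos
  exact isCentralSimple_of_surjective_azumayaMap (surjective_azumayaMap_baseChange k hbij.2)
end

section
/- Let R be a commutative ring and A an associative R-algebra that is finitely generated projective as an R-module. If for every ring homomorphism R → k with k a separably closed field there exists d ≥ 1 with A ⊗_R k ≅ M_d(k) as k-algebras, then for every ring homomorphism R → k with k an arbitrary field, A ⊗_R k is a central simple k-algebra. -/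
open TensorProduct

/-!
Base change to a separable closure `K` of `k` turns `k ⊗[R] A` into
`K ⊗[k] (k ⊗[R] A) ≃ K ⊗[R] A ≃ M_d(K)`, which is central simple over `K`. Both properties
descend from `K ⊗[k] B` to `B`, because a `k`-linear functional on `K` with `1 ↦ 1` yields a
`k`-linear retraction `π` of `b ↦ 1 ⊗ b` with `π (c ⊗ b) ∈ k • b`: for central `z`, the
central element `1 ⊗ z` is some `c ⊗ 1`, so `z = π (c ⊗ 1) ∈ k`; and a nonzero ideal `I` of `B` yields the nonzero ideal `{w | ∀ a b, π (a * w * b) ∈ I}`, which then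
contains `1`, so `1 = π 1 ∈ I`.
-/

section BaseChangeDescent

variable (k K : Type*) {B : Type*} [Field k] [CommRing K] [Nontrivial K] [Algebra k K]
  [Ring B] [Algebra k B]

lemma exists_retraction_includeRight :
    ∃ π : K ⊗[k] B →ₗ[k] B, (∀ b, π (1 ⊗ₜ b) = b) ∧ ∀ c b, ∃ a : k, π (c ⊗ₜ b) = a • b := by
  obtain ⟨f, hf⟩ := Module.Projective.exists_dual_eq_one k (one_ne_zero : (1 : K) ≠ 0)
  refine ⟨TensorProduct.lid k B ∘ₗ f.rTensor B, fun b => ?_, fun c b => ⟨f c, ?_⟩⟩ <;>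
    simp [hf]

theorem Algebra.IsCentral.of_isCentral_baseChange [Algebra.IsCentral K (K ⊗[k] B)] :
    Algebra.IsCentral k B := by
  obtain ⟨π, hπ1, hπ⟩ := exists_retraction_includeRight k K (B := B)
  refine ⟨fun z hz => ?_⟩
  have hz' : (1 : K) ⊗ₜ[k] z ∈ Subalgebra.center K (K ⊗[k] B) :=
    Algebra.TensorProduct.includeRight_map_center_le k K B ⟨z, hz, rfl⟩
  obtain ⟨c, hc⟩ := (Algebra.IsCentral.mem_center_iff K).1 hz'
  obtain ⟨a, ha⟩ := hπ c 1
  refine Algebra.mem_bot.2 ⟨a, ?_⟩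
  rw [Algebra.algebraMap_eq_smul_one, ← ha, ← hπ1 z, hc]
  rfl

theorem IsSimpleRing.of_isSimpleRing_baseChange [hs : IsSimpleRing (K ⊗[k] B)] :
    IsSimpleRing B := by
  obtain ⟨π, hπ1, hπ⟩ := exists_retraction_includeRight k K (B := B)
  have : Nontrivial B := ⟨1, 0, fun h => one_ne_zero (α := K ⊗[k] B) <| by
    rw [Algebra.TensorProduct.one_def, h, tmul_zero]⟩
  refine of_eq_bot_or_eq_top fun I => or_iff_not_imp_left.2 fun hI => ?_
  obtain ⟨z, hzI, hz0⟩ : ∃ z ∈ I, z ≠ 0 := by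
    by_contra! h
    exact hI (eq_bot_iff.2 fun x hx => (TwoSidedIdeal.mem_bot _).2 (h x hx))
  let J : TwoSidedIdeal (K ⊗[k] B) := .mk' {w | ∀ a b, π (a * w * b) ∈ I}
    (fun a b => by simp)
    (fun hx hy a b => by rw [mul_add, add_mul, map_add]; exact I.add_mem (hx a b) (hy a b))
    (fun hx a b => by rw [mul_neg, neg_mul, map_neg]; exact I.neg_mem (hx a b))
    (fun {x _} hy a b => by rw [← mul_assoc]; exact hy (a * x) b)
    (fun {_ y} hx a b => by rw [mul_assoc, mul_assoc, ← mul_assoc]; exact hx a (y * b))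
  have mem_J (w) : w ∈ J ↔ ∀ a b, π (a * w * b) ∈ I := TwoSidedIdeal.mem_mk' ..
  have hzJ : (1 : K) ⊗ₜ z ∈ J := by
    refine (mem_J _).2 fun a b => ?_
    induction a using TensorProduct.induction_on with
    | zero => simp
    | add x y hx hy => rw [add_mul, add_mul, map_add]; exact I.add_mem hx hy
    | tmul c b' =>
      induction b using TensorProduct.induction_on with
      | zero => simp
      | add x y hx hy => rw [mul_add, map_add]; exact I.add_mem hx hy
      | tmul c' b'' =>
        obtain ⟨a, ha⟩ := hπ (c * 1 * c') (b' * z * b'')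
        rw [Algebra.TensorProduct.tmul_mul_tmul, Algebra.TensorProduct.tmul_mul_tmul, ha,
          Algebra.smul_def]
        exact I.mul_mem_left _ _ (I.mul_mem_right _ _ (I.mul_mem_left _ _ hzI))
  have hJ : J = ⊤ := (hs.simple.eq_bot_or_eq_top J).resolve_left fun hJ => hz0 <| by
    rw [hJ, TwoSidedIdeal.mem_bot] at hzJ
    rw [← hπ1 z, hzJ, map_zero]
  have h1 := (mem_J 1).1 (hJ ▸ TwoSidedIdeal.mem_top _) 1 1
  rw [mul_one, mul_one, Algebra.TensorProduct.one_def, hπ1] at h1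
  exact I.eq_top h1

end BaseChangeDescent

theorem stmt1_general {R A : Type u} [CommRing R] [Ring A] [Algebra R A]
    [Module.Finite R A]
    (hsep : ∀ (k : Type u) [Field k] [IsSepClosed k] (φ : R →+* k),
      letI : Algebra R k := φ.toAlgebra
      ∃ d : ℕ, 1 ≤ d ∧ Nonempty ((k ⊗[R] A) ≃ₐ[k] Matrix (Fin d) (Fin d) k)) :
    ∀ (k : Type u) [Field k] (φ : R →+* k),
      letI : Algebra R k := φ.toAlgebra
      IsCentralSimple k (k ⊗[R] A) := by
  intro k _ φ
  letI : Algebra R k := φ.toAlgebra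
  let K := SeparableClosure k
  let ψ : R →+* K := (algebraMap k K).comp φ
  letI : Algebra R K := ψ.toAlgebra
  have : IsScalarTower R k K := .of_algebraMap_eq fun _ => rfl
  obtain ⟨d, hd, ⟨e⟩⟩ := hsep K ψ
  have : Nonempty (Fin d) := ⟨⟨0, hd⟩⟩
  let E : Matrix (Fin d) (Fin d) K ≃ₐ[K] K ⊗[k] (k ⊗[R] A) :=
    (e.symm.trans (Algebra.TensorProduct.congr (Algebra.TensorProduct.rid k K K).symm
      AlgEquiv.refl)).trans (Algebra.TensorProduct.assoc R k K K k A)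
  have := Algebra.IsCentral.of_algEquiv K _ _ E
  have := IsSimpleRing.of_ringEquiv E.toRingEquiv inferInstance
  exact ⟨inferInstance, (Algebra.IsCentral.of_isCentral_baseChange k K).center_eq_bot,
    IsSimpleRing.of_isSimpleRing_baseChange k K⟩

theorem stmt1 {R A : Type u} [CommRing R] [Ring A] [Algebra R A]
    [Module.Finite R A] [Module.Projective R A]
    (hsep : ∀ (k : Type u) [Field k] [IsSepClosed k] (φ : R →+* k),
      letI : Algebra R k := φ.toAlgebra
      ∃ d : ℕ, 1 ≤ d ∧ Nonempty ((k ⊗[R] A) ≃ₐ[k] Matrix (Fin d) (Fin d) k)) :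
    ∀ (k : Type u) [Field k] (φ : R →+* k),
      letI : Algebra R k := φ.toAlgebra
      IsCentralSimple k (k ⊗[R] A) :=
  stmt1_general hsep
end

section
/- Let R be a commutative ring and A, B Azumaya algebras over R. Then the tensor product A ⊗_R B is again an Azumaya algebra over R. -/
open TensorProduct

/-- Azumaya algebra: finitely generated projective faithful module whose sandwich map
`A ⊗[R] Aᵐᵒᵖ → End_R(A)` is bijective. -/
def IsAzumayaAlg (R A : Type*) [CommRing R] [Ring A] [Algebra R A] : Prop :=
  Module.Finite R A ∧ Module.Projective R A ∧ FaithfulSMul R A ∧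
    Function.Bijective (azumayaMap R A)

/-! Up to the shuffle `(A ⊗ B) ⊗ (A ⊗ B)ᵐᵒᵖ ≃ (A ⊗ Aᵐᵒᵖ) ⊗ (B ⊗ Bᵐᵒᵖ)`, the sandwich map of `A ⊗ B`
is the tensor product of the sandwich maps of `A` and `B` followed by the canonical map
`End A ⊗ End B → End (A ⊗ B)`, which is an isomorphism for finitely generated projective modules.
Faithfulness survives because `A` is flat, so `R → A → A ⊗ B` stays injective. -/

section TensorProduct

variable {R A B : Type*} [CommSemiring R] [Semiring A] [Algebra R A] [Semiring B] [Algebra R B]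

theorem faithfulSMul_tensorProduct [Module.Flat R A] [FaithfulSMul R A] [FaithfulSMul R B] :
    FaithfulSMul R (A ⊗[R] B) := by
  rw [faithfulSMul_iff_algebraMap_injective]
  exact (Algebra.TensorProduct.includeLeft_injective (S := R)
    (FaithfulSMul.algebraMap_injective R B)).comp (FaithfulSMul.algebraMap_injective R A)

end TensorProduct

section Azumaya

variable (R A B : Type*) [CommRing R] [Ring A] [Algebra R A] [Ring B] [Algebra R B]

@[simp] theorem azumayaMap_tmul_apply (x : A) (y : Aᵐᵒᵖ) (z : A) :
    azumayaMap R A (x ⊗ₜ y) z = x * z * y.unop := by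
  simp [azumayaMap, mul_assoc]

theorem azumayaMap_tensorProduct_comp :
    azumayaMap R (A ⊗[R] B) ∘ₗ
        ((Algebra.TensorProduct.opAlgEquiv R R A B).toLinearEquiv.lTensor (A ⊗[R] B)).toLinearMap =
      homTensorHomMap (.id R) A B A B ∘ₗ map (azumayaMap R A) (azumayaMap R B) ∘ₗ
        (tensorTensorTensorComm R A B Aᵐᵒᵖ Bᵐᵒᵖ).toLinearMap := by
  ext a b a' b' x y
  simp

end Azumaya

theorem stmt4 {R A B : Type*} [CommRing R] [Ring A] [Algebra R A] [Ring B] [Algebra R B]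
    (hA : IsAzumayaAlg R A) (hB : IsAzumayaAlg R B) :
    IsAzumayaAlg R (A ⊗[R] B) := by
  obtain ⟨_, _, _, hA⟩ := hA
  obtain ⟨_, _, _, hB⟩ := hB
  refine ⟨inferInstance, inferInstance, faithfulSMul_tensorProduct, ?_⟩
  rw [← EquivLike.bijective_comp
      ((Algebra.TensorProduct.opAlgEquiv R R A B).toLinearEquiv.lTensor (A ⊗[R] B)),
    ← LinearEquiv.coe_coe, ← LinearMap.coe_comp, azumayaMap_tensorProduct_comp,
    ← homTensorHomEquiv_toLinearMap]
  exact (homTensorHomEquiv R A B A B).bijective.comp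
    ((map_bijective hA hB).comp (tensorTensorTensorComm R A B Aᵐᵒᵖ Bᵐᵒᵖ).bijective)
end

section
/- Let R be a commutative ring and A an Azumaya algebra over R. Then A ⊗_R A^op is Brauer equivalent to R; more precisely, A ⊗_R A^op ≅ End_R(A) as R-algebras, with A a finitely generated projective faithful R-module. Consequently every element of the Brauer group of R is invertible with inverse given by the opposite algebra. -/
open TensorProduct

/-- Brauer equivalence of `R`-algebras: `A ⊗ End(E) ≅ B ⊗ End(F)` for some finitely
generated projective faithful `R`-modules `E`, `F`. -/
def BrauerEquiv (R A B : Type u) [CommRing R] [Ring A] [Algebra R A] [Ring B] [Algebra R B] :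
    Prop :=
  ∃ (E F : Type u) (_ : AddCommGroup E) (_ : Module R E) (_ : AddCommGroup F) (_ : Module R F),
    Module.Finite R E ∧ Module.Projective R E ∧ FaithfulSMul R E ∧
    Module.Finite R F ∧ Module.Projective R F ∧ FaithfulSMul R F ∧
    Nonempty ((A ⊗[R] Module.End R E) ≃ₐ[R] (B ⊗[R] Module.End R F))


/-! The sandwich map of `IsAzumaya'` is Mathlib's `AlgHom.mulLeftRight`, so its bijectivity gives
`A ⊗ Aᵐᵒᵖ ≃ₐ End_R(A)`. Taking `E = R` (as `End_R(R) ≃ₐ R`) and `F = A`, the Brauer equivalence is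
`(A ⊗ Aᵐᵒᵖ) ⊗ End_R(R) ≃ₐ A ⊗ Aᵐᵒᵖ ≃ₐ End_R(A) ≃ₐ R ⊗ End_R(A)`. -/

theorem azumayaMap_eq_mulLeftRight (R A : Type*) [CommRing R] [Ring A] [Algebra R A] :
    azumayaMap R A = (AlgHom.mulLeftRight R A).toLinearMap := by
  ext x y z
  simp [azumayaMap, mul_assoc]

theorem isAzumaya'_iff_isAzumaya {R A : Type*} [CommRing R] [Ring A] [Algebra R A] :
    IsAzumaya' R A ↔ IsAzumaya R A := by
  rw [IsAzumaya', azumayaMap_eq_mulLeftRight, AlgHom.coe_toLinearMap]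
  exact ⟨fun ⟨_, _, _, h⟩ => ⟨h⟩, fun h => ⟨h.toFinite, h.toProjective, h.toFaithfulSMul, h.bij⟩⟩

theorem brauerEquiv_self_of_algEquiv_end {R B E : Type u} [CommRing R] [Ring B] [Algebra R B]
    [AddCommGroup E] [Module R E] [Module.Finite R E] [Module.Projective R E] [FaithfulSMul R E]
    (e : B ≃ₐ[R] Module.End R E) : BrauerEquiv R B R :=
  ⟨R, E, _, _, _, _, inferInstance, inferInstance, inferInstance, inferInstance, inferInstance,
    inferInstance,
    ⟨(Algebra.TensorProduct.congr .refl
        ((AlgEquiv.toOpposite R R).trans (.moduleEndSelf R)).symm).trans <|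
      (Algebra.TensorProduct.rid R R B).trans <| e.trans (Algebra.TensorProduct.lid R _).symm⟩⟩

theorem stmt5 {R A : Type u} [CommRing R] [Ring A] [Algebra R A] (hA : IsAzumaya' R A) :
    Nonempty ((A ⊗[R] Aᵐᵒᵖ) ≃ₐ[R] Module.End R A) ∧
    Module.Finite R A ∧ Module.Projective R A ∧ FaithfulSMul R A ∧
    BrauerEquiv R (A ⊗[R] Aᵐᵒᵖ) R := by
  have : IsAzumaya R A := isAzumaya'_iff_isAzumaya.mp hA
  let e := AlgEquiv.ofBijective (AlgHom.mulLeftRight R A) IsAzumaya.bij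
  exact ⟨⟨e⟩, inferInstance, inferInstance, inferInstance, brauerEquiv_self_of_algEquiv_end e⟩
end

section
/- Let k be a field and A a central simple k-algebra of degree d. For a left ideal I ⊆ A that is a direct summand of A as a left A-module with dim_k I = d (i.e., a point of the Severi–Brauer variety of A over k), the existence of such an I implies ind(A) = 1, i.e., A ≅ M_d(k). -/
open TensorProduct

/-!
A nonzero left ideal `I` of a simple algebra `A` is a faithful `A`-module, so `A` embeds into
`End_k(I)`. When `dim_k I = d` and `dim_k A = d²` both sides have dimension `d²`, so the embedding
is onto and `A ≅ End_k(I) ≅ M_d(k)`.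
-/

open Module

theorem IsSimpleRing.lsmul_bijective_of_finrank_eq_sq {k A M : Type*} [Field k] [Ring A]
    [Algebra k A] [IsSimpleRing A] [FiniteDimensional k A] [AddCommGroup M] [Module k M]
    [Module A M] [IsScalarTower k A M] [FiniteDimensional k M] [Nontrivial M]
    (h : finrank k A = finrank k M ^ 2) :
    Function.Bijective (Algebra.lsmul k k M : A → Module.End k M) := by
  have hinj : Function.Injective (Algebra.lsmul k k M : A →ₐ[k] Module.End k M) :=
    RingHom.injective (Algebra.lsmul k k M : A →ₐ[k] Module.End k M).toRingHom
  have hrank : finrank k A = finrank k (Module.End k M) := by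
    rw [h, finrank_linearMap, sq]
  exact ⟨hinj, (LinearMap.injective_iff_surjective_of_finrank_eq_finrank hrank
    (f := (Algebra.lsmul k k M).toLinearMap)).mp hinj⟩

theorem stmt17_general {k A : Type*} [Field k] [Ring A] [Algebra k A]
    (d : ℕ) (hd : 1 ≤ d) (hdim : Module.finrank k A = d ^ 2) (hcs : IsCentralSimple k A)
    (I : Submodule A A)
    (hdimI : Module.finrank k (I.restrictScalars k) = d) :
    Nonempty (A ≃ₐ[k] Matrix (Fin d) (Fin d) k) := by
  obtain ⟨hfin, -, hsimple⟩ := hcs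
  have hfinrankI : finrank k I = d := hdimI
  have : Nontrivial I := Module.nontrivial_of_finrank_pos (R := k) (by omega)
  have hbij := IsSimpleRing.lsmul_bijective_of_finrank_eq_sq (k := k) (A := A) (M := I)
    (by rw [hdim, hfinrankI])
  exact ⟨(AlgEquiv.ofBijective _ hbij).trans (algEquivMatrix (finBasisOfFinrankEq k I hfinrankI))⟩

theorem stmt17 {k A : Type*} [Field k] [Ring A] [Algebra k A]
    (d : ℕ) (hd : 1 ≤ d) (hdim : Module.finrank k A = d ^ 2) (hcs : IsCentralSimple k A)
    (I : Submodule A A) (hsummand : ∃ J : Submodule A A, IsCompl I J)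
    (hdimI : Module.finrank k (I.restrictScalars k) = d) :
    Nonempty (A ≃ₐ[k] Matrix (Fin d) (Fin d) k) :=
  stmt17_general d hd hdim hcs I hdimI
end
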